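/- arXiv:2511.22424 — 3 statements merged into one kernel-verified Lean document; each statement's English description precedes it below -/
import Mathlib

section
/- Let A be a symmetric positive-definite n×n matrix, F : ℝⁿ → ℝⁿ with continuous components (F(x))_i = φ_i(x_i) where each φ_i is nondecreasing, f ∈ ℝⁿ, and H(x) = Ax + F(x) − f. Then for any x⁰ ∈ ℝⁿ and α ∈ (0,1), the level set D₀ = { x ∈ ℝⁿ : ‖H(x)‖² ≤ (1+α)² ‖H(x⁰)‖² } is bounded. -/
/-!
Positive definiteness gives `c‖u‖² ≤ u ⬝ Au` for some `c > 0`, and each product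
`(φᵢ(xᵢ) - φᵢ(yᵢ))(xᵢ - yᵢ)` is nonnegative because `φᵢ` is monotone; hence `H` is strongly
monotone, `c‖x - y‖² ≤ (Hx - Hy) ⬝ (x - y)`. By Cauchy–Schwarz `c‖x - y‖ ≤ ‖Hx - Hy‖`, so `H` is
antilipschitz and every sublevel set of `‖H‖²`, whatever its level, is bounded.
-/

open Matrix Bornology
open scoped RealInnerProductSpace

lemma Monotone.sub_mul_sub_nonneg {φ : ℝ → ℝ} (hφ : Monotone φ) (a b : ℝ) :
    0 ≤ (φ a - φ b) * (a - b) := by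
  rcases le_total a b with h | h
  · exact mul_nonneg_of_nonpos_of_nonpos (sub_nonpos.2 (hφ h)) (sub_nonpos.2 h)
  · exact mul_nonneg (sub_nonneg.2 (hφ h)) (sub_nonneg.2 h)

section

variable {ι : Type*} [Fintype ι]

lemma EuclideanSpace.inner_toLp_toLp_eq_dotProduct (v w : ι → ℝ) :
    ⟪WithLp.toLp 2 v, WithLp.toLp 2 w⟫ = v ⬝ᵥ w := by
  rw [EuclideanSpace.inner_toLp_toLp, star_trivial, dotProduct_comm]

lemma EuclideanSpace.norm_toLp_sq (v : ι → ℝ) : ‖WithLp.toLp 2 v‖ ^ 2 = v ⬝ᵥ v := by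
  rw [← real_inner_self_eq_norm_sq, inner_toLp_toLp_eq_dotProduct]

lemma Matrix.PosDef.exists_pos_mul_dotProduct_self_le {A : Matrix ι ι ℝ} (hA : A.PosDef) :
    ∃ c > 0, ∀ v : ι → ℝ, c * (v ⬝ᵥ v) ≤ v ⬝ᵥ A *ᵥ v := by
  cases isEmpty_or_nonempty ι
  · exact ⟨1, one_pos, fun v => by simp [dotProduct]⟩
  let q : EuclideanSpace ℝ ι → ℝ := fun v => v.ofLp ⬝ᵥ A *ᵥ v.ofLp
  have hq_smul (t : ℝ) (v) : q (t • v) = t ^ 2 * q v := by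
    simp only [q, WithLp.ofLp_smul, mulVec_smul, dotProduct_smul, smul_dotProduct, smul_eq_mul]
    ring
  have hq : Continuous q := by fun_prop
  obtain ⟨v₀, hv₀, hmin⟩ := (isCompact_sphere (0 : EuclideanSpace ℝ ι) 1).exists_isMinOn
    (NormedSpace.sphere_nonempty.2 zero_le_one) hq.continuousOn
  have hv₀_ne : v₀.ofLp ≠ 0 := by
    rintro h
    simp [(WithLp.ofLp_eq_zero 2).1 h] at hv₀
  refine ⟨q v₀, by simpa using hA.dotProduct_mulVec_pos hv₀_ne, fun v => ?_⟩
  obtain rfl | hv := eq_or_ne v 0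
  · simp
  set w := WithLp.toLp 2 v
  have hw : 0 < ‖w‖ := norm_pos_iff.2 (by simpa [w] using hv)
  have h : q v₀ ≤ q (‖w‖⁻¹ • w) := hmin (by simp [norm_smul, hw.ne'])
  rw [hq_smul, inv_pow, inv_mul_eq_div, le_div_iff₀ (by positivity),
    EuclideanSpace.norm_toLp_sq] at h
  exact h

lemma antilipschitzWith_of_strongly_monotone {E : Type*} [NormedAddCommGroup E]
    [InnerProductSpace ℝ E] {G : E → E} {c : ℝ} (hc : 0 < c)
    (hG : ∀ x y, c * ‖x - y‖ ^ 2 ≤ ⟪G x - G y, x - y⟫) :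
    AntilipschitzWith (Real.toNNReal c⁻¹) G := by
  refine AntilipschitzWith.of_le_mul_dist fun x y => ?_
  rw [Real.coe_toNNReal _ (inv_nonneg.2 hc.le), dist_eq_norm, dist_eq_norm, inv_mul_eq_div,
    le_div_iff₀ hc]
  have h := (hG x y).trans (real_inner_le_norm _ _)
  rcases (norm_nonneg (x - y)).eq_or_lt with h0 | h0
  · rw [← h0, zero_mul]
    exact norm_nonneg _
  · nlinarith

lemma isBounded_setOf_dotProduct_self_le {H : (ι → ℝ) → ι → ℝ} {c : ℝ} (hc : 0 < c)
    (hH : ∀ x y, c * ((x - y) ⬝ᵥ (x - y)) ≤ (H x - H y) ⬝ᵥ (x - y)) (r : ℝ) :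
    IsBounded {x | H x ⬝ᵥ H x ≤ r} := by
  let G : EuclideanSpace ℝ ι → EuclideanSpace ℝ ι := fun x => WithLp.toLp 2 (H x.ofLp)
  have hG := antilipschitzWith_of_strongly_monotone (G := G) hc fun x y => by
    have h := hH x.ofLp y.ofLp
    rwa [← EuclideanSpace.norm_toLp_sq, ← EuclideanSpace.inner_toLp_toLp_eq_dotProduct,
      WithLp.toLp_sub, WithLp.toLp_sub, WithLp.toLp_ofLp, WithLp.toLp_ofLp] at h
  refine ((hG.comp (PiLp.antilipschitzWith_toLp 2 _)).isBounded_preimage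
    (Metric.isBounded_closedBall (x := 0) (r := √r))).subset fun x hx => ?_
  rw [Set.mem_preimage, Function.comp_apply, mem_closedBall_zero_iff]
  simpa [G, abs_norm] using Real.abs_le_sqrt ((EuclideanSpace.norm_toLp_sq (H x)).trans_le hx)

end

theorem stmt_2_general (n : ℕ) (A : Matrix (Fin n) (Fin n) ℝ) (hApd : A.PosDef)
    (φ : Fin n → ℝ → ℝ) (hφmono : ∀ i, Monotone (φ i))
    (f : Fin n → ℝ)
    (F H : (Fin n → ℝ) → (Fin n → ℝ))
    (hF : ∀ x i, F x i = φ i (x i))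
    (hH : ∀ x, H x = A.mulVec x + F x - f)
    (x0 : Fin n → ℝ) (α : ℝ) :
    Bornology.IsBounded
      {x : Fin n → ℝ |
        dotProduct (H x) (H x) ≤ (1 + α)^2 * dotProduct (H x0) (H x0)} := by
  obtain ⟨c, hc, hA⟩ := hApd.exists_pos_mul_dotProduct_self_le
  refine isBounded_setOf_dotProduct_self_le hc (fun x y => ?_) _
  have hF_mono : 0 ≤ (F x - F y) ⬝ᵥ (x - y) := Finset.sum_nonneg fun i _ => by
    simpa only [Pi.sub_apply, hF] using (hφmono i).sub_mul_sub_nonneg (x i) (y i)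
  calc c * ((x - y) ⬝ᵥ (x - y)) ≤ (A *ᵥ (x - y)) ⬝ᵥ (x - y) := by
        rw [dotProduct_comm (A *ᵥ _)]; exact hA _
    _ ≤ (A *ᵥ (x - y) + (F x - F y)) ⬝ᵥ (x - y) := by rw [add_dotProduct]; linarith
    _ = (H x - H y) ⬝ᵥ (x - y) := by rw [hH, hH, mulVec_sub]; congr 1; abel

/-- The level set `D₀ = {x : ‖H x‖² ≤ (1+α)² ‖H x⁰‖²}` of the merit function is
bounded, where `H x = A x + F x - f`, `A` symmetric positive definite and `F`
has continuous nondecreasing diagonal components. (`‖v‖² = v ⬝ᵥ v`.) -/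
theorem stmt_2 (n : ℕ) (A : Matrix (Fin n) (Fin n) ℝ) (hApd : A.PosDef)
    (φ : Fin n → ℝ → ℝ) (hφmono : ∀ i, Monotone (φ i))
    (hφcont : ∀ i, Continuous (φ i))
    (f : Fin n → ℝ)
    (F H : (Fin n → ℝ) → (Fin n → ℝ))
    (hF : ∀ x i, F x i = φ i (x i))
    (hH : ∀ x, H x = A.mulVec x + F x - f)
    (x0 : Fin n → ℝ) (α : ℝ) (hα : α ∈ Set.Ioo (0:ℝ) 1) :
    Bornology.IsBounded
      {x : Fin n → ℝ |
        dotProduct (H x) (H x) ≤ (1 + α)^2 * dotProduct (H x0) (H x0)} :=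
  stmt_2_general n A hApd φ hφmono f F H hF hH x0 α
end

section
/- Let f : ℝ → ℝ be continuous, and suppose there is x_d and ε₀ > 0 such that f is C² on [x_d − ε₀, x_d] and on [x_d, x_d + ε₀], with one-sided derivatives satisfying f'₋(x_d) > f'₊(x_d). Then there exists ε > 0 such that for every δ ∈ (0, ε), f'₊(x_d + δ) ≤ (f(x_d + δ) − f(x_d − δ))/(2δ) ≤ f'₋(x_d − δ); in particular f is tangent extendable on [x_d − δ, x_d + δ]. -/
/-- Local tangent extendability near a derivative discontinuity: if `f` is
continuous, `C²` on `[x_d - ε₀, x_d]` and on `[x_d, x_d + ε₀]`, with one-sided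
derivatives `f'₋(x_d) > f'₊(x_d)`, then there is `ε > 0` such that for all
`δ ∈ (0, ε)` the mean slope over `[x_d - δ, x_d + δ]` lies between the one-sided
derivatives at the endpoints, i.e. `f` is tangent extendable there. -/
theorem stmt_6 (f : ℝ → ℝ) (hf : Continuous f)
    (xd ε₀ : ℝ) (hε₀ : 0 < ε₀)
    (hC2l : ContDiffOn ℝ 2 f (Set.Icc (xd - ε₀) xd))
    (hC2r : ContDiffOn ℝ 2 f (Set.Icc xd (xd + ε₀)))
    (dm dp : ℝ)
    (hdm : HasDerivWithinAt f dm (Set.Iic xd) xd)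
    (hdp : HasDerivWithinAt f dp (Set.Ici xd) xd)
    (hjump : dp < dm) :
    ∃ ε > 0, ∀ δ : ℝ, 0 < δ → δ < ε →
      derivWithin f (Set.Icc xd (xd + ε₀)) (xd + δ) ≤
          (f (xd + δ) - f (xd - δ)) / (2 * δ) ∧
        (f (xd + δ) - f (xd - δ)) / (2 * δ) ≤
          derivWithin f (Set.Icc (xd - ε₀) xd) (xd - δ) := by
  set d := dm - dp with hd_def
  have hd : 0 < d := sub_pos.mpr hjump
  set sR := Set.Icc xd (xd + ε₀) with hsR
  set sL := Set.Icc (xd - ε₀) xd with hsL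
  have huR : UniqueDiffOn ℝ sR := uniqueDiffOn_Icc (by linarith)
  have huL : UniqueDiffOn ℝ sL := uniqueDiffOn_Icc (by linarith)
  have hdiffR : DifferentiableOn ℝ f sR := hC2r.differentiableOn (by norm_num)
  have hdiffL : DifferentiableOn ℝ f sL := hC2l.differentiableOn (by norm_num)
  have hcontR : ContinuousOn (derivWithin f sR) sR :=
    hC2r.continuousOn_derivWithin huR (by norm_num)
  have hcontL : ContinuousOn (derivWithin f sL) sL :=
    hC2l.continuousOn_derivWithin huL (by norm_num)
  have hxdR : xd ∈ sR := by constructor <;> simp <;> linarith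
  have hxdL : xd ∈ sL := by constructor <;> simp <;> linarith
  have hderivR : derivWithin f sR xd = dp :=
    (hdp.mono Set.Icc_subset_Ici_self).derivWithin (huR xd hxdR)
  have hderivL : derivWithin f sL xd = dm :=
    (hdm.mono Set.Icc_subset_Iic_self).derivWithin (huL xd hxdL)
  -- continuity at xd
  have hcR := (hcontR xd hxdR)
  have hcL := (hcontL xd hxdL)
  rw [Metric.continuousWithinAt_iff] at hcR hcL
  obtain ⟨εr, hεr, hR⟩ := hcR (d / 4) (by linarith)
  obtain ⟨εl, hεl, hL⟩ := hcL (d / 4) (by linarith)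
  refine ⟨min ε₀ (min εl εr), by positivity, fun δ hδ hδε => ?_⟩
  have hδε₀ : δ ≤ ε₀ := le_of_lt (lt_of_lt_of_le hδε (min_le_left _ _))
  have hδεl : δ < εl := lt_of_lt_of_le hδε (le_trans (min_le_right _ _) (min_le_left _ _))
  have hδεr : δ < εr := lt_of_lt_of_le hδε (le_trans (min_le_right _ _) (min_le_right _ _))
  -- bound on derivWithin near xd, right side
  have hboundR : ∀ x ∈ Set.Icc xd (xd + δ), |derivWithin f sR x - dp| ≤ d / 4 := by
    intro x hx
    have hxR : x ∈ sR := ⟨hx.1, le_trans hx.2 (by linarith)⟩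
    have : dist x xd < εr := by
      rw [Real.dist_eq, abs_of_nonneg (by linarith [hx.1])]
      linarith [hx.2]
    have := hR hxR this
    rw [Real.dist_eq, hderivR] at this
    exact le_of_lt this
  have hboundL : ∀ x ∈ Set.Icc (xd - δ) xd, |derivWithin f sL x - dm| ≤ d / 4 := by
    intro x hx
    have hxL : x ∈ sL := ⟨by linarith [hx.1], hx.2⟩
    have : dist x xd < εl := by
      rw [Real.dist_eq, abs_of_nonpos (by linarith [hx.2])]
      linarith [hx.1]
    have := hL hxL this
    rw [Real.dist_eq, hderivL] at this
    exact le_of_lt this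
  -- MVT bound, right side
  have hmemR : xd + δ ∈ sR := ⟨by linarith, by linarith⟩
  have hmemL : xd - δ ∈ sL := ⟨by linarith, by linarith⟩
  have keyR : |f (xd + δ) - f xd - dp * δ| ≤ d / 4 * δ := by
    have hsub : Set.Icc xd (xd + δ) ⊆ sR := Set.Icc_subset_Icc le_rfl (by linarith)
    have hder : ∀ x ∈ Set.Icc xd (xd + δ),
        HasDerivWithinAt (fun y => f y - dp * y) (derivWithin f sR x - dp)
          (Set.Icc xd (xd + δ)) x := by
      intro x hx
      exact (((hdiffR x (hsub hx)).hasDerivWithinAt.mono hsub).sub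
        (by simpa using ((hasDerivWithinAt_id x (Set.Icc xd (xd + δ))).const_mul dp)))
    have := Convex.norm_image_sub_le_of_norm_hasDerivWithin_le hder
      (fun x hx => by simpa using hboundR x hx) (convex_Icc _ _)
      (Set.left_mem_Icc.mpr (by linarith)) (Set.right_mem_Icc.mpr (by linarith))
    simp only [Real.norm_eq_abs] at this
    have h2 : |xd + δ - xd| = δ := by rw [show xd + δ - xd = δ by ring, abs_of_pos hδ]
    rw [h2] at this
    calc |f (xd + δ) - f xd - dp * δ|
        = |(f (xd + δ) - dp * (xd + δ)) - (f xd - dp * xd)| := by ring_nf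
      _ ≤ d / 4 * δ := this
  have keyL : |f xd - f (xd - δ) - dm * δ| ≤ d / 4 * δ := by
    have hsub : Set.Icc (xd - δ) xd ⊆ sL := Set.Icc_subset_Icc (by linarith) le_rfl
    have hder : ∀ x ∈ Set.Icc (xd - δ) xd,
        HasDerivWithinAt (fun y => f y - dm * y) (derivWithin f sL x - dm)
          (Set.Icc (xd - δ) xd) x := by
      intro x hx
      exact (((hdiffL x (hsub hx)).hasDerivWithinAt.mono hsub).sub
        (by simpa using ((hasDerivWithinAt_id x (Set.Icc (xd - δ) xd)).const_mul dm)))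
    have := Convex.norm_image_sub_le_of_norm_hasDerivWithin_le hder
      (fun x hx => by simpa using hboundL x hx) (convex_Icc _ _)
      (Set.left_mem_Icc.mpr (by linarith)) (Set.right_mem_Icc.mpr (by linarith))
    simp only [Real.norm_eq_abs] at this
    have h2 : |xd - (xd - δ)| = δ := by rw [show xd - (xd - δ) = δ by ring, abs_of_pos hδ]
    rw [h2] at this
    calc |f xd - f (xd - δ) - dm * δ|
        = |(f xd - dm * xd) - (f (xd - δ) - dm * (xd - δ))| := by ring_nf
      _ ≤ d / 4 * δ := this
  rw [abs_le] at keyR keyL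
  have hdR := hboundR (xd + δ) ⟨by linarith, le_rfl⟩
  have hdL := hboundL (xd - δ) ⟨le_rfl, by linarith⟩
  rw [abs_le] at hdR hdL
  have h2δ : 0 < 2 * δ := by linarith
  constructor
  · rw [le_div_iff₀ h2δ]
    nlinarith [keyR.1, keyL.1, hdR.2]
  · rw [div_le_iff₀ h2δ]
    nlinarith [keyR.2, keyL.2, hdL.1]
end

section
/- Let V_h ⊂ V be a finite-dimensional subspace of a Hilbert space V, a(·,·) a bounded coercive symmetric bilinear form on V with coercivity constant α (with respect to the seminorm ‖∇·‖), and {u_h^k}_{k=0}^K ⊂ V_h satisfy, for each k, ((u_h^{k+1} − u_h^k)/τ, φ) + ((w_h^{k+1} − w_h^k)/τ, φ) + a(u_h^{k+1}, φ) = (f̄^{k+1}, φ) for all φ ∈ V_h, where the hysteresis outputs satisfy the discrete monotonicity (w_h^{k+1} − w_h^k)(u_h^{k+1} − u_h^k) ≥ 0 pointwise a.e. Then Σ_{n=1}^{K} τ ‖(u_h^n − u_h^{n−1})/τ‖² + max_{1≤n≤K} α‖∇u_h^n‖² + α Σ_{n=1}^{K} ‖∇u_h^n − ∇u_h^{n−1}‖²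 ≤ C(‖∇u_h^0‖² + Σ_{n=1}^{K} τ‖f̄^n‖²) for a constant C depending only on α and the form a. -/
open RealInnerProductSpace

/-- A priori stability estimate for the fully discrete quasilinear scheme: with a
symmetric bilinear form `a` satisfying `α‖∇u‖² ≤ a(u,u) ≤ β‖∇u‖²` (the seminorm
`‖∇u‖ = ‖grad u‖`), there is a constant `C` depending only on `α, β` (i.e. on `α`
and the form) such that any discrete solution of
`((u^{k+1}-u^k)/τ, φ) + ((w^{k+1}-w^k)/τ, φ) + a(u^{k+1}, φ) = (f̄^{k+1}, φ)` for
all `φ`, with pointwise monotonicity `(w^{k+1}-w^k, u^{k+1}-u^k) ≥ 0`, satisfies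
`Σ τ‖(uⁿ-uⁿ⁻¹)/τ‖² + max α‖∇uⁿ‖² + α Σ ‖∇uⁿ-∇uⁿ⁻¹‖² ≤ C(‖∇u⁰‖² + Σ τ‖f̄ⁿ‖²)`. -/
theorem stmt_17 (V W : Type*)
    [NormedAddCommGroup V] [InnerProductSpace ℝ V]
    [NormedAddCommGroup W] [InnerProductSpace ℝ W]
    (grad : V →ₗ[ℝ] W) (a : V →ₗ[ℝ] V →ₗ[ℝ] ℝ)
    (α β : ℝ) (hα : 0 < α) (hβ : 0 < β)
    (hsymm : ∀ u v : V, a u v = a v u)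
    (hcoer : ∀ u : V, α * ‖grad u‖ ^ 2 ≤ a u u)
    (hbound : ∀ u : V, a u u ≤ β * ‖grad u‖ ^ 2) :
    ∃ C > 0, ∀ (K : ℕ) (hK : 1 ≤ K) (τ : ℝ) (_hτ : 0 < τ),
      ∀ (u w fbar : ℕ → V),
      (∀ k < K, ∀ φ : V,
        (1 / τ) * ⟪u (k + 1) - u k, φ⟫ + (1 / τ) * ⟪w (k + 1) - w k, φ⟫ +
          a (u (k + 1)) φ = ⟪fbar (k + 1), φ⟫) →
      (∀ k < K, (0:ℝ) ≤ ⟪w (k + 1) - w k, u (k + 1) - u k⟫) →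
      (∑ n ∈ Finset.Icc 1 K, τ * ‖(τ⁻¹ : ℝ) • (u n - u (n - 1))‖ ^ 2) +
          ((Finset.Icc 1 K).sup' (Finset.nonempty_Icc.mpr hK)
            (fun n => α * ‖grad (u n)‖ ^ 2)) +
          α * ∑ n ∈ Finset.Icc 1 K, ‖grad (u n) - grad (u (n - 1))‖ ^ 2 ≤
        C * (‖grad (u 0)‖ ^ 2 + ∑ n ∈ Finset.Icc 1 K, τ * ‖fbar n‖ ^ 2) := by
  refine ⟨2 * (β + 1), by positivity, ?_⟩
  intro K hK τ hτ u w fbar hsch hmono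
  have hτ0 : τ ≠ 0 := ne_of_gt hτ
  set A : ℕ → ℝ := fun n => a (u n) (u n) with hA
  set D : ℕ → ℝ :=
    fun n => ‖u n - u (n - 1)‖ ^ 2 / τ + α * ‖grad (u n) - grad (u (n - 1))‖ ^ 2 with hD
  -- per-step energy inequality
  have step : ∀ n < K, D (n + 1) + A (n + 1) ≤ A n + τ * ‖fbar (n + 1)‖ ^ 2 := by
    intro n hn
    have heq := hsch n hn (u (n + 1) - u n)
    have hm := hmono n hn
    have hip : ⟪u (n + 1) - u n, u (n + 1) - u n⟫ = ‖u (n + 1) - u n‖ ^ 2 :=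
      real_inner_self_eq_norm_sq _
    have e1 : a (u (n + 1) - u n) (u (n + 1) - u n) =
        A (n + 1) - a (u (n + 1)) (u n) - a (u n) (u (n + 1)) + A n := by
      simp only [map_sub, LinearMap.sub_apply, hA]; ring
    have e2 : a (u (n + 1)) (u (n + 1) - u n) = A (n + 1) - a (u (n + 1)) (u n) := by
      simp only [map_sub, hA]
    have hsy := hsymm (u (n + 1)) (u n)
    have hexp : a (u (n + 1)) (u (n + 1) - u n) =
        (A (n + 1) - A n + a (u (n + 1) - u n) (u (n + 1) - u n)) / 2 := by
      rw [e2, e1]; linarith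
    have hcδ : α * ‖grad (u (n + 1)) - grad (u n)‖ ^ 2 ≤
        a (u (n + 1) - u n) (u (n + 1) - u n) := by
      have := hcoer (u (n + 1) - u n)
      rwa [map_sub] at this
    have hcs : ⟪fbar (n + 1), u (n + 1) - u n⟫ ≤ ‖fbar (n + 1)‖ * ‖u (n + 1) - u n‖ :=
      real_inner_le_norm _ _
    have hwm := hmono n hn
    have hsy2 : ⟪w (n + 1) - w n, u (n + 1) - u n⟫ ≥ 0 := hwm
    -- clear denominators
    have ht0 : (0:ℝ) < τ⁻¹ := inv_pos.mpr hτ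
    have htτ : τ * τ⁻¹ = 1 := mul_inv_cancel₀ hτ0
    have heq' : τ⁻¹ * ‖u (n + 1) - u n‖ ^ 2 +
        τ⁻¹ * ⟪w (n + 1) - w n, u (n + 1) - u n⟫ +
        (A (n + 1) - A n + a (u (n + 1) - u n) (u (n + 1) - u n)) / 2 =
        ⟪fbar (n + 1), u (n + 1) - u n⟫ := by
      rw [← hexp, ← hip]
      rw [one_div] at heq
      linarith [heq]
    have hsucc : (n + 1) - 1 = n := by omega
    simp only [hD, hsucc, div_eq_inv_mul]
    nlinarith [mul_nonneg ht0.le hsy2,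
      mul_nonneg ht0.le (sq_nonneg (τ * ‖fbar (n + 1)‖ - ‖u (n + 1) - u n‖)),
      sq_nonneg (‖fbar (n + 1)‖), sq_nonneg ‖u (n + 1) - u n‖]
  -- summed energy inequality
  have key : ∀ n ≤ K, (∑ k ∈ Finset.Icc 1 n, D k) + A n ≤
      A 0 + ∑ k ∈ Finset.Icc 1 n, τ * ‖fbar k‖ ^ 2 := by
    intro n hn
    induction n with
    | zero => simp
    | succ m ih =>
      have hm : m < K := hn
      have ihm := ih (le_of_lt hm)
      have hstep := step m hm
      rw [Finset.sum_Icc_succ_top (Nat.succ_le_succ (Nat.zero_le m)),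
        Finset.sum_Icc_succ_top (Nat.succ_le_succ (Nat.zero_le m))]
      linarith
  have hDnn : ∀ k, 0 ≤ D k := by
    intro k
    simp only [hD]
    positivity
  have hAnn : ∀ n, 0 ≤ A n := fun n => le_trans (by positivity) (hcoer (u n))
  have hA0 : A 0 ≤ β * ‖grad (u 0)‖ ^ 2 := hbound (u 0)
  set F : ℝ := ∑ n ∈ Finset.Icc 1 K, τ * ‖fbar n‖ ^ 2 with hF
  have hFnn : 0 ≤ F := Finset.sum_nonneg fun n _ => by positivity
  have hg0 : (0:ℝ) ≤ ‖grad (u 0)‖ ^ 2 := by positivity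
  -- rewrite the first and third sums as ∑ D
  have hS : (∑ n ∈ Finset.Icc 1 K, τ * ‖(τ⁻¹ : ℝ) • (u n - u (n - 1))‖ ^ 2) +
      α * ∑ n ∈ Finset.Icc 1 K, ‖grad (u n) - grad (u (n - 1))‖ ^ 2 =
      ∑ n ∈ Finset.Icc 1 K, D n := by
    rw [Finset.mul_sum, ← Finset.sum_add_distrib]
    refine Finset.sum_congr rfl fun n _ => ?_
    rw [norm_smul, Real.norm_eq_abs, abs_of_pos (inv_pos.mpr hτ)]
    simp only [hD]
    field_simp
  -- bound on the sup
  have hmax : (Finset.Icc 1 K).sup' (Finset.nonempty_Icc.mpr hK)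
      (fun n => α * ‖grad (u n)‖ ^ 2) ≤ (β + 1) * (‖grad (u 0)‖ ^ 2 + F) := by
    refine Finset.sup'_le _ _ fun n hn => ?_
    have hnK : n ≤ K := (Finset.mem_Icc.mp hn).2
    have hkey := key n hnK
    have hsub : ∑ k ∈ Finset.Icc 1 n, τ * ‖fbar k‖ ^ 2 ≤ F := by
      refine Finset.sum_le_sum_of_subset_of_nonneg ?_ fun k _ _ => by positivity
      exact Finset.Icc_subset_Icc_right hnK
    have hDsum : 0 ≤ ∑ k ∈ Finset.Icc 1 n, D k :=
      Finset.sum_nonneg fun k _ => hDnn k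
    have h1 : α * ‖grad (u n)‖ ^ 2 ≤ A n := hcoer (u n)
    nlinarith
  -- total bound
  have hkeyK := key K le_rfl
  have hDK : (∑ n ∈ Finset.Icc 1 K, D n) ≤ (β + 1) * (‖grad (u 0)‖ ^ 2 + F) := by
    nlinarith [hAnn K]
  linarith [hS, hmax, hDK]
end
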